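/- Let μ be the Gibbs distribution of a q-state spin system on an n-vertex graph, and let α_0,…,α_{n−2} be nonnegative real numbers such that for every k ∈ {0,…,n−2}, every subset U ⊆ V with |U| = k, every pinning τ on U, and every f : Ω → ℝ_{≥0}: (1+α_k) · Av_{x∉U} Ent_{μ^τ}(μ^{τ,x} f) ≤ Av_{x,y∉U, x≠y} Ent_{μ^τ}(μ^{τ,x,y} f). Then for every f : Ω → ℝ_{≥0} and every j ∈ {1,…,n−1}: Av_{|U|=j} Ent(μ^U f) ≤ (1 − κ_j) · Ent(f), where κ_j = (∑_{i=j}^{n−1} Γ_i)/(∑_{i=0}^{n−1} Γ_i), Γ_0 = 1, and Γ_i = ∏_{k=0}^{i−1} α_k for i ≥ 1. -/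

import Mathlib

open scoped BigOperators
open Classical
noncomputable section

/-- Spin configurations on `n` vertices with `q` spin values. -/
abbrev Cfg (n q : ℕ) := Fin n → Fin q

/-! ### Generic finite probability notions -/

section Generic
variable {Ω : Type*} [Fintype Ω]

/-- Expectation of `f` under the (finitely supported) distribution `π`. -/
def expec (π f : Ω → ℝ) : ℝ := ∑ s, π s * f s

/-- Entropy functional `Ent_π(f) = π[f log f] - π[f] log π[f]`. -/
def entOf (π f : Ω → ℝ) : ℝ :=
  expec π (fun s => f s * Real.log (f s)) - expec π f * Real.log (expec π f)

/-- `π` is a probability distribution. -/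
def IsProb (π : Ω → ℝ) : Prop := (∀ s, 0 ≤ π s) ∧ ∑ s, π s = 1

/-- `P` is a stochastic (Markov transition) matrix. -/
def IsStochastic (P : Ω → Ω → ℝ) : Prop :=
  (∀ s s', 0 ≤ P s s') ∧ ∀ s, ∑ s', P s s' = 1

/-- `π` is a stationary distribution for `P`. -/
def IsStationaryFn (P : Ω → Ω → ℝ) (π : Ω → ℝ) : Prop :=
  ∀ s', ∑ s, π s * P s s' = π s'

/-- `t`-step transition probabilities. -/
def matPow (P : Ω → Ω → ℝ) : ℕ → Ω → Ω → ℝ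
  | 0 => fun s s' => if s = s' then 1 else 0
  | t + 1 => fun s s' => ∑ s'', matPow P t s s'' * P s'' s'

/-- Total variation distance of two distributions. -/
def tvDist (π ρ : Ω → ℝ) : ℝ := (∑ s, |π s - ρ s|) / 2

/-- Mixing time `max_{X₀} min { t : ‖P^t(X₀,·) − π‖_TV ≤ 1/4 }`. -/
def mixingTime (P : Ω → Ω → ℝ) (π : Ω → ℝ) : ℕ :=
  Finset.univ.sup fun s0 => sInf {t : ℕ | tvDist (matPow P t s0) π ≤ 1/4}

/-- Dirichlet form `D_P(f,g) = ⟨f, (I-P) g⟩_π`. -/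
def dirichletForm (P : Ω → Ω → ℝ) (π f g : Ω → ℝ) : ℝ :=
  ∑ s, π s * (f s * (g s - ∑ s', P s s' * g s'))

/-- The modified log-Sobolev inequality with constant `ρ`. -/
def MLSI (P : Ω → Ω → ℝ) (π : Ω → ℝ) (ρ : ℝ) : Prop :=
  ∀ f : Ω → ℝ, (∀ s, 0 < f s) →
    ρ * entOf π f ≤ dirichletForm P π f (fun s => Real.log (f s))

/-- The standard log-Sobolev inequality with constant `c`. -/
def LSI (P : Ω → Ω → ℝ) (π : Ω → ℝ) (c : ℝ) : Prop :=
  ∀ f : Ω → ℝ, (∀ s, 0 ≤ f s) →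
    c * entOf π f ≤ dirichletForm P π (fun s => Real.sqrt (f s)) (fun s => Real.sqrt (f s))

/-- `π` is a coupling of `μ` and `ν`. -/
def IsCoupling (π : Ω × Ω → ℝ) (μ ν : Ω → ℝ) : Prop :=
  (∀ p, 0 ≤ π p) ∧ (∀ s, ∑ s', π (s, s') = μ s) ∧ (∀ s', ∑ s, π (s, s') = ν s')

/-- 1-Wasserstein distance of `μ` and `ν` with respect to `d`. -/
def W1 (d : Ω → Ω → ℝ) (μ ν : Ω → ℝ) : ℝ :=
  sInf {r | ∃ π : Ω × Ω → ℝ, IsCoupling π μ ν ∧ r = ∑ p, π p * d p.1 p.2}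

/-- Optimal Lipschitz constant of `f` with respect to `d`. -/
def lipConst (d : Ω → Ω → ℝ) (f : Ω → ℝ) : ℝ :=
  sInf {L | 0 ≤ L ∧ ∀ a b, |f a - f b| ≤ L * d a b}

end Generic

/-- `d` is a metric (given as a real-valued distance function). -/
structure IsMetricFn {Ω : Type*} (d : Ω → Ω → ℝ) : Prop where
  refl : ∀ a, d a a = 0
  pos : ∀ a b, a ≠ b → 0 < d a b
  symm : ∀ a b, d a b = d b a
  triangle : ∀ a b c, d a c ≤ d a b + d b c

/-! ### Spin systems -/

/-- Hamming distance between two configurations. -/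
def hamming {n q : ℕ} (σ τ : Cfg n q) : ℕ :=
  (Finset.univ.filter fun x => σ x ≠ τ x).card

/-- The graph `G` has maximum degree at most `Δ`. -/
def maxDegreeLE {n : ℕ} (G : SimpleGraph (Fin n)) (Δ : ℕ) : Prop :=
  ∀ v : Fin n, (Finset.univ.filter fun u => G.Adj v u).card ≤ Δ

/-- A `q`-state spin system on the `n`-vertex graph `G`, given by nonnegative symmetric
pairwise interactions `A` on the edges and nonnegative external fields `B`. -/
structure SpinSystem (n q : ℕ) where
  G : SimpleGraph (Fin n)
  A : Fin n → Fin n → Fin q → Fin q → ℝ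
  B : Fin n → Fin q → ℝ
  A_nonneg : ∀ x y a b, 0 ≤ A x y a b
  A_symm : ∀ x y a b, A x y a b = A y x b a
  B_nonneg : ∀ x a, 0 ≤ B x a

namespace SpinSystem

variable {n q : ℕ}

/-- The weight of a configuration. -/
def wt (S : SpinSystem n q) (σ : Cfg n q) : ℝ :=
  (∏ x : Fin n, ∏ y : Fin n,
      if x < y ∧ S.G.Adj x y then S.A x y (σ x) (σ y) else 1) *
    ∏ x : Fin n, S.B x (σ x)

/-- The weight of a configuration compatible with the pinning `τ` on `U`. -/
def condWt (S : SpinSystem n q) (U : Finset (Fin n)) (τ σ : Cfg n q) : ℝ :=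
  if ∀ x ∈ U, σ x = τ x then S.wt σ else 0

/-- Conditional partition function given the pinning `τ` on `U`. -/
def condZ (S : SpinSystem n q) (U : Finset (Fin n)) (τ : Cfg n q) : ℝ :=
  ∑ σ : Cfg n q, S.condWt U τ σ

/-- The Gibbs distribution conditioned on the pinning `τ` on `U`. -/
def condMu (S : SpinSystem n q) (U : Finset (Fin n)) (τ : Cfg n q) (σ : Cfg n q) : ℝ :=
  S.condWt U τ σ / S.condZ U τ

/-- The (unconditioned) Gibbs distribution. -/
def gibbs (S : SpinSystem n q) : Cfg n q → ℝ := fun σ => S.wt σ / ∑ σ' : Cfg n q, S.wt σ'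

/-- `τ` restricted to `U` is a feasible pinning. -/
def IsPinning (S : SpinSystem n q) (U : Finset (Fin n)) (τ : Cfg n q) : Prop :=
  ∃ σ : Cfg n q, 0 < S.wt σ ∧ ∀ x ∈ U, σ x = τ x

/-- The marginal probability that the spin at `x` equals `a`, under the pinning `τ` on `U`. -/
def margin (S : SpinSystem n q) (U : Finset (Fin n)) (τ : Cfg n q) (x : Fin n) (a : Fin q) : ℝ :=
  ∑ σ : Cfg n q, if σ x = a then S.condMu U τ σ else 0

/-- `(x,a)` is a feasible (unpinned) vertex-spin pair under the pinning `τ` on `U`. -/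
def allowed (S : SpinSystem n q) (U : Finset (Fin n)) (τ : Cfg n q) (x : Fin n) (a : Fin q) :
    Prop :=
  x ∉ U ∧ 0 < S.margin U τ x a

/-- The ALO influence matrix `J^τ` of the pinned measure `μ^τ` (extended by `0` outside the
set of feasible vertex-spin pairs). -/
def Jmat (S : SpinSystem n q) (U : Finset (Fin n)) (τ : Cfg n q)
    (p p' : Fin n × Fin q) : ℝ :=
  if p.1 = p'.1 then 0
  else if S.allowed U τ p.1 p.2 ∧ S.allowed U τ p'.1 p'.2 then
    S.margin (insert p.1 U) (Function.update τ p.1 p.2) p'.1 p'.2 - S.margin U τ p'.1 p'.2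
  else 0

/-- Spectral independence: every (real) eigenvalue of every pinned influence matrix `J^τ`
is at most `η`. -/
def SpectrallyIndependent (S : SpinSystem n q) (η : ℝ) : Prop :=
  ∀ U τ, S.IsPinning U τ → ∀ (t : ℝ) (φ : Fin n × Fin q → ℝ),
    (∀ p, ¬ S.allowed U τ p.1 p.2 → φ p = 0) → φ ≠ 0 →
    (∀ p, (∑ p' : Fin n × Fin q, S.Jmat U τ p p' * φ p') = t * φ p) →
    t ≤ η

/-- `b`-marginal boundedness: every positive conditional marginal is at least `b`. -/
def MarginallyBounded (S : SpinSystem n q) (b : ℝ) : Prop :=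
  ∀ U τ, S.IsPinning U τ → ∀ x, x ∉ U → ∀ a : Fin q,
    0 < S.margin U τ x a → b ≤ S.margin U τ x a

/-- Total connectivity: for every pinning, any two configurations in the support of the
pinned measure are connected by single-site moves within the support. -/
def TotallyConnected (S : SpinSystem n q) : Prop :=
  ∀ U τ, S.IsPinning U τ → ∀ σ σ' : Cfg n q,
    0 < S.condWt U τ σ → 0 < S.condWt U τ σ' →
    Relation.ReflTransGen
      (fun a b => 0 < S.condWt U τ a ∧ 0 < S.condWt U τ b ∧ hamming a b = 1) σ σ'

/-- Conditional expectation `μ^U f` of `f` given the spins on `U`. -/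
def condExp (S : SpinSystem n q) (U : Finset (Fin n)) (f : Cfg n q → ℝ) : Cfg n q → ℝ :=
  fun σ => expec (S.condMu U σ) f

/-- Expected conditional entropy `μ[Ent_B f]`. -/
def muEnt (S : SpinSystem n q) (B : Finset (Fin n)) (f : Cfg n q → ℝ) : ℝ :=
  ∑ σ : Cfg n q, S.gibbs σ * entOf (S.condMu Bᶜ σ) f

/-- The `α`-weighted heat-bath block dynamics. -/
def blockDyn (S : SpinSystem n q) (α : Finset (Fin n) → ℝ) (σ σ' : Cfg n q) : ℝ :=
  ∑ B : Finset (Fin n), α B * S.condMu Bᶜ σ σ'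

/-- The Glauber dynamics for the measure pinned on `U` (a uniformly random vertex is chosen;
pinned vertices leave the configuration unchanged, unpinned vertices are resampled from the
conditional distribution given all the other spins). -/
def glauberPin (S : SpinSystem n q) (U : Finset (Fin n)) (σ σ' : Cfg n q) : ℝ :=
  (n : ℝ)⁻¹ * ∑ x : Fin n,
    if x ∈ U then (if σ' = σ then 1 else 0)
    else S.condMu (({x} : Finset (Fin n))ᶜ) σ σ'

/-- The (unpinned) Glauber dynamics. -/
def glauber (S : SpinSystem n q) : Cfg n q → Cfg n q → ℝ := S.glauberPin ∅

/-- The Dobrushin dependency matrix. -/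
def dobrushin (S : SpinSystem n q) (x y : Fin n) : ℝ :=
  if x = y then 0 else
    sSup {r | ∃ σ τ : Cfg n q,
      S.IsPinning (Finset.univ.erase y) σ ∧ S.IsPinning (Finset.univ.erase y) τ ∧
      (∀ z : Fin n, z ≠ x → z ≠ y → σ z = τ z) ∧
      r = tvDist (fun a : Fin q => S.margin (Finset.univ.erase y) σ y a)
                 (fun a : Fin q => S.margin (Finset.univ.erase y) τ y a)}

end SpinSystem

/-- `δ(α) = min_x ∑_{B ∋ x} α_B`. -/
def deltaOf (n : ℕ) (α : Finset (Fin n) → ℝ) : ℝ :=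
  ⨅ x : Fin n, ∑ B ∈ Finset.univ.filter (fun B : Finset (Fin n) => x ∈ B), α B

/-- General block factorization of entropy with constant `C`. -/
def GBF {n q : ℕ} (S : SpinSystem n q) (C : ℝ) : Prop :=
  ∀ α : Finset (Fin n) → ℝ, (∀ B, 0 ≤ α B) → (∑ B : Finset (Fin n), α B = 1) →
    ∀ f : Cfg n q → ℝ, (∀ σ, 0 ≤ f σ) →
      deltaOf n α * entOf S.gibbs f ≤ C * ∑ B : Finset (Fin n), α B * S.muEnt B f

/-- `ℓ`-uniform block factorization of entropy with constant `C`. -/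
def UBF {n q : ℕ} (S : SpinSystem n q) (ℓ : ℕ) (C : ℝ) : Prop :=
  ∀ f : Cfg n q → ℝ, (∀ σ, 0 ≤ f σ) →
    ((ℓ : ℝ) / n) * entOf S.gibbs f ≤
      C * ((Nat.choose n ℓ : ℝ)⁻¹ *
        ∑ Λ ∈ Finset.powersetCard ℓ (Finset.univ : Finset (Fin n)), S.muEnt Λ f)

/-- `P` is a partition of the vertex set into independent sets of `G`. -/
def IsIndepPartition {n k : ℕ} (G : SimpleGraph (Fin n)) (P : Fin k → Finset (Fin n)) : Prop :=
  (∀ x : Fin n, ∃! i, x ∈ P i) ∧ ∀ i, ∀ x ∈ P i, ∀ y ∈ P i, ¬ G.Adj x y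

/-- `k`-partite factorization of entropy with constant `C` relative to the partition `P`. -/
def KPF {n q k : ℕ} (S : SpinSystem n q) (P : Fin k → Finset (Fin n)) (C : ℝ) : Prop :=
  ∀ f : Cfg n q → ℝ, (∀ σ, 0 ≤ f σ) →
    entOf S.gibbs f ≤ C * ∑ i : Fin k, S.muEnt (P i) f

/-! ### Metrics on configurations and contraction -/

/-- Hamming metric, real-valued. -/
def dHam {n q : ℕ} (σ τ : Cfg n q) : ℝ := (hamming σ τ : ℝ)

/-- `w`-weighted Hamming metric. -/
def dW {n q : ℕ} (w : Fin n → ℝ) (σ τ : Cfg n q) : ℝ :=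
  ∑ x : Fin n, if σ x ≠ τ x then w x else 0

/-- `d` is `γ`-equivalent to the Hamming metric. -/
def GammaEquiv {n q : ℕ} (γ : ℝ) (d : Cfg n q → Cfg n q → ℝ) : Prop :=
  ∀ σ τ : Cfg n q, (1 / γ) * dHam σ τ ≤ d σ τ ∧ d σ τ ≤ γ * dHam σ τ

/-- `μ` is `κ`-contractive with respect to the family of chains `P` (one for each pinning)
and the metric `d`: from any two states in the support of the pinned measure there is a
one-step coupling contracting `d` by a factor `κ` in expectation. -/
def ContractiveFam {n q : ℕ} (S : SpinSystem n q)
    (P : Finset (Fin n) → Cfg n q → Cfg n q → Cfg n q → ℝ)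
    (d : Cfg n q → Cfg n q → ℝ) (κ : ℝ) : Prop :=
  ∀ U τ, S.IsPinning U τ → ∀ X₀ Y₀ : Cfg n q,
    0 < S.condWt U τ X₀ → 0 < S.condWt U τ Y₀ →
    ∃ π : Cfg n q × Cfg n q → ℝ,
      IsCoupling π (P U τ X₀) (P U τ Y₀) ∧
      (∑ p : Cfg n q × Cfg n q, π p * d p.1 p.2) ≤ κ * d X₀ Y₀

/-- The family of chains `P` is `Φ`-local: extending a pinning by a single feasible
vertex-spin pair changes one step of the chain by at most `Φ` in Wasserstein distance
with respect to the Hamming metric. -/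
def PhiLocal {n q : ℕ} (S : SpinSystem n q)
    (P : Finset (Fin n) → Cfg n q → Cfg n q → Cfg n q → ℝ) (Φ : ℝ) : Prop :=
  ∀ U τ, S.IsPinning U τ → ∀ x, x ∉ U → ∀ a : Fin q,
    0 < S.margin U τ x a →
    ∀ σ : Cfg n q, 0 < S.condWt (insert x U) (Function.update τ x a) σ →
      W1 dHam (P U τ σ) (P (insert x U) (Function.update τ x a) σ) ≤ Φ

/-- A select-update dynamics for the spin system `S`: a block is selected from a
distribution that may depend on the current configuration (but not on the pinning),
and the configuration on the block is resampled from a distribution that may depend on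
the current configuration and on the restriction of the pinning to the block; for each
pinning the resulting chain has the pinned Gibbs measure as stationary distribution. -/
structure SelectUpdate {n q : ℕ} (S : SpinSystem n q) where
  blocks : Finset (Finset (Fin n))
  sel : Cfg n q → Finset (Fin n) → ℝ
  sel_nonneg : ∀ σ B, 0 ≤ sel σ B
  sel_sum : ∀ σ, ∑ B ∈ blocks, sel σ B = 1
  upd : Finset (Fin n) → Cfg n q → Cfg n q → Finset (Fin n) → Cfg n q → ℝ
  upd_nonneg : ∀ U τ σ B σ', 0 ≤ upd U τ σ B σ'
  upd_sum : ∀ U τ σ B, ∑ σ' : Cfg n q, upd U τ σ B σ' = 1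
  upd_off : ∀ U τ σ B σ', upd U τ σ B σ' ≠ 0 → ∀ x ∉ B, σ' x = σ x
  upd_local : ∀ U U' τ τ' σ B, U ∩ B = U' ∩ B → (∀ x ∈ U ∩ B, τ x = τ' x) →
    upd U τ σ B = upd U' τ' σ B
  stat : ∀ U τ, S.IsPinning U τ →
    IsStationaryFn (fun σ σ' => ∑ B ∈ blocks, sel σ B * upd U τ σ B σ') (S.condMu U τ)

/-- The transition matrix of the select-update dynamics under the pinning `τ` on `U`. -/
def SelectUpdate.chain {n q : ℕ} {S : SpinSystem n q} (SU : SelectUpdate S)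
    (U : Finset (Fin n)) (τ : Cfg n q) (σ σ' : Cfg n q) : ℝ :=
  ∑ B ∈ SU.blocks, SU.sel σ B * SU.upd U τ σ B σ'

/-- Spectral radius of a real square matrix (largest modulus of a complex eigenvalue). -/
def specRad {n : ℕ} (M : Matrix (Fin n) (Fin n) ℝ) : ℝ :=
  sSup {r : ℝ | ∃ z : ℂ, z ∈ spectrum ℂ (M.map ((↑) : ℝ → ℂ)) ∧ r = ‖z‖}

/-! ### Models: Potts/Ising, colorings, Swendsen-Wang, Edwards-Sokal -/

/-- The `q`-state ferromagnetic Potts model at inverse temperature `β`. -/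
def pottsSystem (n q : ℕ) (β : ℝ) (G : SimpleGraph (Fin n)) : SpinSystem n q where
  G := G
  A := fun _ _ a b => Real.exp (if a = b then β else 0)
  B := fun _ _ => 1
  A_nonneg := fun _ _ _ _ => (Real.exp_pos _).le
  A_symm := by
    intro x y a b
    by_cases h : a = b
    · subst h; rfl
    · have h' : ¬ b = a := fun hba => h hba.symm
      simp [h, h']
  B_nonneg := fun _ _ => zero_le_one

/-- The ferromagnetic Ising model at inverse temperature `β`. -/
def isingSystem (n : ℕ) (β : ℝ) (G : SimpleGraph (Fin n)) : SpinSystem n 2 :=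
  pottsSystem n 2 β G

/-- The proper `q`-colorings model (so its Gibbs distribution is the uniform distribution
over proper `q`-colorings). -/
def coloringSystem (n q : ℕ) (G : SimpleGraph (Fin n)) : SpinSystem n q where
  G := G
  A := fun _ _ a b => if a = b then 0 else 1
  B := fun _ _ => 1
  A_nonneg := by
    intro x y a b; split <;> norm_num
  A_symm := by
    intro x y a b
    by_cases h : a = b
    · subst h; rfl
    · have h' : ¬ b = a := fun hba => h hba.symm
      simp [h, h']
  B_nonneg := fun _ _ => zero_le_one

/-- The set of edges of `G` that are monochromatic in `σ`. -/
def monoEdges {n q : ℕ} (G : SimpleGraph (Fin n)) (σ : Cfg n q) : Finset (Sym2 (Fin n)) :=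
  Finset.univ.filter fun e => e ∈ G.edgeSet ∧ ∀ x ∈ e, ∀ y ∈ e, σ x = σ y

/-- The edge set of `G` as a finset. -/
def edgesOf {n : ℕ} (G : SimpleGraph (Fin n)) : Finset (Sym2 (Fin n)) :=
  Finset.univ.filter fun e => e ∈ G.edgeSet

/-- The Swendsen-Wang dynamics: each monochromatic edge is retained independently with
probability `p`, and then every connected component of the retained graph receives an
independent uniformly random spin. -/
def swStep {n : ℕ} (G : SimpleGraph (Fin n)) (q : ℕ) (p : ℝ) (σ σ' : Cfg n q) : ℝ :=
  ∑ A ∈ (monoEdges G σ).powerset,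
    p ^ A.card * (1 - p) ^ ((monoEdges G σ).card - A.card) *
      (if ∀ x y : Fin n,
            (SimpleGraph.fromEdgeSet (A : Set (Sym2 (Fin n)))).Reachable x y → σ' x = σ' y
       then ((q : ℝ))⁻¹ ^
          (Nat.card (SimpleGraph.fromEdgeSet (A : Set (Sym2 (Fin n)))).ConnectedComponent)
       else 0)

/-- Edwards-Sokal weight of a joint spin-edge configuration, with `p = 1 - e^{-β}`. -/
def esWt {n : ℕ} (G : SimpleGraph (Fin n)) (q : ℕ) (β : ℝ)
    (p0 : Cfg n q × Finset (Sym2 (Fin n))) : ℝ :=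
  if p0.2 ⊆ monoEdges G p0.1 then
    (1 - Real.exp (-β)) ^ p0.2.card * (Real.exp (-β)) ^ ((edgesOf G).card - p0.2.card)
  else 0

/-- Edwards-Sokal (joint) measure. -/
def esMu {n : ℕ} (G : SimpleGraph (Fin n)) (q : ℕ) (β : ℝ)
    (p0 : Cfg n q × Finset (Sym2 (Fin n))) : ℝ :=
  esWt G q β p0 / ∑ p1 : Cfg n q × Finset (Sym2 (Fin n)), esWt G q β p1

/-- Edwards-Sokal measure conditioned on the spin configuration being `σ0`. -/
def esCondSpin {n : ℕ} (G : SimpleGraph (Fin n)) (q : ℕ) (β : ℝ) (σ0 : Cfg n q)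
    (p0 : Cfg n q × Finset (Sym2 (Fin n))) : ℝ :=
  if p0.1 = σ0 then
    esWt G q β p0 / ∑ A : Finset (Sym2 (Fin n)), esWt G q β (σ0, A)
  else 0

/-- Edwards-Sokal measure conditioned on the edge configuration being `A0`. -/
def esCondEdge {n : ℕ} (G : SimpleGraph (Fin n)) (q : ℕ) (β : ℝ) (A0 : Finset (Sym2 (Fin n)))
    (p0 : Cfg n q × Finset (Sym2 (Fin n))) : ℝ :=
  if p0.2 = A0 then
    esWt G q β p0 / ∑ σ : Cfg n q, esWt G q β (σ, A0)
  else 0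

/-- `ν[Ent_ν(f | σ)]`: the expected conditional entropy of `f` given the spins. -/
def esSpinEnt {n : ℕ} (G : SimpleGraph (Fin n)) (q : ℕ) (β : ℝ)
    (f : Cfg n q × Finset (Sym2 (Fin n)) → ℝ) : ℝ :=
  ∑ p0 : Cfg n q × Finset (Sym2 (Fin n)), esMu G q β p0 * entOf (esCondSpin G q β p0.1) f

/-- `ν[Ent_ν(f | A)]`: the expected conditional entropy of `f` given the edges. -/
def esEdgeEnt {n : ℕ} (G : SimpleGraph (Fin n)) (q : ℕ) (β : ℝ)
    (f : Cfg n q × Finset (Sym2 (Fin n)) → ℝ) : ℝ :=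
  ∑ p0 : Cfg n q × Finset (Sym2 (Fin n)), esMu G q β p0 * entOf (esCondEdge G q β p0.2) f


/-! ### Auxiliary lemmas for the local-to-global entropy recursion -/

section AuxEnt

open Finset

lemma entOf_nonneg' {Ω : Type*} [Fintype Ω] {π f : Ω → ℝ}
    (hπ : ∀ s, 0 ≤ π s) (hsum : ∑ s, π s = 1) (hf : ∀ s, 0 ≤ f s) :
    0 ≤ entOf π f := by
  have h := Real.convexOn_mul_log.map_sum_le (t := Finset.univ) (w := π) (p := f)
    (fun i _ => hπ i) hsum (fun i _ => hf i)
  simp only [smul_eq_mul] at h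
  unfold entOf expec
  linarith

lemma entOf_congr {Ω : Type*} [Fintype Ω] {π g g' : Ω → ℝ}
    (h : ∀ s, π s ≠ 0 → g s = g' s) : entOf π g = entOf π g' := by
  have key1 : ∑ s, π s * (g s * Real.log (g s)) = ∑ s, π s * (g' s * Real.log (g' s)) := by
    refine Finset.sum_congr rfl fun s _ => ?_
    by_cases hs : π s = 0
    · simp [hs]
    · rw [h s hs]
  have key2 : ∑ s, π s * g s = ∑ s, π s * g' s := by
    refine Finset.sum_congr rfl fun s _ => ?_
    by_cases hs : π s = 0
    · simp [hs]
    · rw [h s hs]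
  simp only [entOf, expec]
  rw [key1, key2]

end AuxEnt

namespace SpinSystem

open Finset

variable {n q : ℕ} (S : SpinSystem n q)

lemma wt_nonneg (σ : Cfg n q) : 0 ≤ S.wt σ := by
  unfold wt
  refine mul_nonneg (Finset.prod_nonneg fun x _ => Finset.prod_nonneg fun y _ => ?_)
    (Finset.prod_nonneg fun x _ => S.B_nonneg _ _)
  split
  · exact S.A_nonneg _ _ _ _
  · exact zero_le_one

lemma condWt_nonneg (U : Finset (Fin n)) (τ σ : Cfg n q) : 0 ≤ S.condWt U τ σ := by
  unfold condWt; split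
  · exact S.wt_nonneg σ
  · exact le_rfl

lemma condZ_nonneg (U : Finset (Fin n)) (τ : Cfg n q) : 0 ≤ S.condZ U τ :=
  Finset.sum_nonneg fun σ _ => S.condWt_nonneg U τ σ

lemma condMu_nonneg (U : Finset (Fin n)) (τ σ : Cfg n q) : 0 ≤ S.condMu U τ σ :=
  div_nonneg (S.condWt_nonneg _ _ _) (S.condZ_nonneg _ _)

lemma gibbs_nonneg (σ : Cfg n q) : 0 ≤ S.gibbs σ :=
  div_nonneg (S.wt_nonneg _) (Finset.sum_nonneg fun σ' _ => S.wt_nonneg σ')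

lemma condWt_le_condZ (U : Finset (Fin n)) (τ σ : Cfg n q) : S.condWt U τ σ ≤ S.condZ U τ :=
  Finset.single_le_sum (fun σ' _ => S.condWt_nonneg U τ σ') (Finset.mem_univ σ)

lemma condWt_congr {U : Finset (Fin n)} {τ τ' : Cfg n q} (h : ∀ x ∈ U, τ x = τ' x)
    (σ : Cfg n q) : S.condWt U τ σ = S.condWt U τ' σ := by
  unfold condWt
  have hiff : (∀ x ∈ U, σ x = τ x) ↔ (∀ x ∈ U, σ x = τ' x) :=
    ⟨fun hc x hx => (hc x hx).trans (h x hx), fun hc x hx => (hc x hx).trans (h x hx).symm⟩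
  simp only [hiff]

lemma condZ_congr {U : Finset (Fin n)} {τ τ' : Cfg n q} (h : ∀ x ∈ U, τ x = τ' x) :
    S.condZ U τ = S.condZ U τ' :=
  Finset.sum_congr rfl fun σ _ => S.condWt_congr h σ

lemma sum_condMu (U : Finset (Fin n)) (τ : Cfg n q) :
    ∑ σ : Cfg n q, S.condMu U τ σ = if S.condZ U τ = 0 then 0 else 1 := by
  unfold condMu
  rw [← Finset.sum_div]
  split_ifs with h
  · simp [h]
  · exact div_self h

lemma condMu_empty (τ : Cfg n q) : S.condMu ∅ τ = S.gibbs := by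
  funext σ
  have h : ∀ σ' : Cfg n q, S.condWt ∅ τ σ' = S.wt σ' := by
    intro σ'
    unfold condWt
    simp
  unfold condMu condZ gibbs
  rw [h, Finset.sum_congr rfl fun σ' _ => h σ']

/-- The crucial tower property of conditional Gibbs measures. -/
lemma condMu_tower {U W : Finset (Fin n)} (hUW : U ⊆ W) (τ σ'' : Cfg n q) :
    ∑ σ' : Cfg n q, S.condMu U τ σ' * S.condMu W σ' σ'' = S.condMu U τ σ'' := by
  have key : ∀ σ' : Cfg n q, S.condMu U τ σ' * S.condMu W σ' σ'' =
      (if ∀ x ∈ W, σ'' x = σ' x then S.condWt U τ σ' else 0) *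
        (S.wt σ'' / (S.condZ U τ * S.condZ W σ'')) := by
    intro σ'
    by_cases hag : ∀ x ∈ W, σ'' x = σ' x
    · have hz : S.condZ W σ' = S.condZ W σ'' :=
        S.condZ_congr (fun x hx => (hag x hx).symm)
      have e1 : S.condMu W σ' σ'' = S.wt σ'' / S.condZ W σ'' := by
        unfold condMu condWt
        rw [if_pos hag, hz]
      rw [e1, if_pos hag,
        show S.condMu U τ σ' = S.condWt U τ σ' / S.condZ U τ from rfl]
      ring
    · have e1 : S.condMu W σ' σ'' = 0 := by
        unfold condMu condWt
        rw [if_neg hag, zero_div]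
      rw [e1, if_neg hag, mul_zero, zero_mul]
  rw [Finset.sum_congr rfl (fun σ' _ => key σ'), ← Finset.sum_mul]
  by_cases hU : ∀ x ∈ U, σ'' x = τ x
  · have hin : (∑ σ' : Cfg n q, if ∀ x ∈ W, σ'' x = σ' x then S.condWt U τ σ' else 0)
        = S.condZ W σ'' := by
      unfold condZ condWt
      refine Finset.sum_congr rfl fun σ' _ => ?_
      by_cases hag : ∀ x ∈ W, σ'' x = σ' x
      · have hagU : ∀ x ∈ U, σ' x = τ x :=
          fun x hx => ((hag x (hUW hx)).symm).trans (hU x hx)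
        rw [if_pos hag, if_pos hagU, if_pos (fun x hx => (hag x hx).symm)]
      · rw [if_neg hag, if_neg (fun h => hag (fun x hx => (h x hx).symm))]
    have hRHS : S.condMu U τ σ'' = S.wt σ'' / S.condZ U τ := by
      unfold condMu condWt
      rw [if_pos hU]
    rw [hin, hRHS]
    by_cases hzw : S.condZ W σ'' = 0
    · have h2 : S.condWt W σ'' σ'' = S.wt σ'' := by
        unfold condWt; rw [if_pos (fun x _ => rfl)]
      have h1 := S.condWt_le_condZ W σ'' σ''
      rw [h2, hzw] at h1
      have hw0 : S.wt σ'' = 0 := le_antisymm h1 (S.wt_nonneg σ'')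
      rw [hzw, hw0]
      simp
    · by_cases hzu : S.condZ U τ = 0
      · simp [hzu]
      · field_simp
  · have hin : (∑ σ' : Cfg n q, if ∀ x ∈ W, σ'' x = σ' x then S.condWt U τ σ' else 0) = 0 := by
      refine Finset.sum_eq_zero fun σ' _ => ?_
      by_cases hag : ∀ x ∈ W, σ'' x = σ' x
      · rw [if_pos hag]
        unfold condWt
        rw [if_neg (fun hagU => hU (fun x hx => (hag x (hUW hx)).trans (hagU x hx)))]
      · rw [if_neg hag]
    have hRHS : S.condMu U τ σ'' = 0 := by
      unfold condMu condWt
      rw [if_neg hU, zero_div]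
    rw [hin, hRHS, zero_mul]

lemma sum_gibbs_condMu (U : Finset (Fin n)) (σ'' : Cfg n q) :
    ∑ σ : Cfg n q, S.gibbs σ * S.condMu U σ σ'' = S.gibbs σ'' := by
  have h := S.condMu_tower (Finset.empty_subset U) σ'' σ''
  simpa [S.condMu_empty] using h

lemma condExp_tower {U W : Finset (Fin n)} (hUW : U ⊆ W) (f : Cfg n q → ℝ) :
    S.condExp U (S.condExp W f) = S.condExp U f := by
  funext τ
  show ∑ σ' : Cfg n q, S.condMu U τ σ' * ∑ σ'' : Cfg n q, S.condMu W σ' σ'' * f σ''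
      = ∑ σ'' : Cfg n q, S.condMu U τ σ'' * f σ''
  calc ∑ σ' : Cfg n q, S.condMu U τ σ' * ∑ σ'' : Cfg n q, S.condMu W σ' σ'' * f σ''
      = ∑ σ' : Cfg n q, ∑ σ'' : Cfg n q, S.condMu U τ σ' * S.condMu W σ' σ'' * f σ'' := by
        refine Finset.sum_congr rfl fun σ' _ => ?_
        rw [Finset.mul_sum]
        exact Finset.sum_congr rfl fun σ'' _ => by ring
    _ = ∑ σ'' : Cfg n q, ∑ σ' : Cfg n q, S.condMu U τ σ' * S.condMu W σ' σ'' * f σ'' :=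
        Finset.sum_comm
    _ = ∑ σ'' : Cfg n q, S.condMu U τ σ'' * f σ'' := by
        refine Finset.sum_congr rfl fun σ'' _ => ?_
        rw [← Finset.sum_mul, S.condMu_tower hUW]

lemma expec_gibbs_condMu (U : Finset (Fin n)) (φ : Cfg n q → ℝ) :
    ∑ σ : Cfg n q, S.gibbs σ * expec (S.condMu U σ) φ = expec S.gibbs φ := by
  unfold expec
  calc ∑ σ : Cfg n q, S.gibbs σ * ∑ σ'' : Cfg n q, S.condMu U σ σ'' * φ σ''
      = ∑ σ : Cfg n q, ∑ σ'' : Cfg n q, S.gibbs σ * S.condMu U σ σ'' * φ σ'' := by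
        refine Finset.sum_congr rfl fun σ _ => ?_
        rw [Finset.mul_sum]
        exact Finset.sum_congr rfl fun σ'' _ => by ring
    _ = ∑ σ'' : Cfg n q, ∑ σ : Cfg n q, S.gibbs σ * S.condMu U σ σ'' * φ σ'' :=
        Finset.sum_comm
    _ = ∑ σ'' : Cfg n q, S.gibbs σ'' * φ σ'' := by
        refine Finset.sum_congr rfl fun σ'' _ => ?_
        rw [← Finset.sum_mul, S.sum_gibbs_condMu]

/-- The chain rule (tower property) for entropy. -/
lemma chain_rule {U W : Finset (Fin n)} (hUW : U ⊆ W) (f : Cfg n q → ℝ) :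
    entOf S.gibbs (S.condExp W f)
      = entOf S.gibbs (S.condExp U f)
        + ∑ σ : Cfg n q, S.gibbs σ * entOf (S.condMu U σ) (S.condExp W f) := by
  set g := S.condExp W f with hg
  have hmean : ∀ σ, expec (S.condMu U σ) g = S.condExp U f σ := by
    intro σ
    exact congrFun (S.condExp_tower hUW f) σ
  have h1 : ∑ σ : Cfg n q, S.gibbs σ * expec (S.condMu U σ) (fun s => g s * Real.log (g s))
      = expec S.gibbs (fun s => g s * Real.log (g s)) :=
    S.expec_gibbs_condMu U _
  have h2 : ∑ σ : Cfg n q, S.gibbs σ * expec (S.condMu U σ) g = expec S.gibbs g :=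
    S.expec_gibbs_condMu U _
  have h2' : expec S.gibbs (S.condExp U f) = expec S.gibbs g := by
    rw [← h2]
    exact Finset.sum_congr rfl fun σ _ => by rw [hmean σ]
  have hsplit : ∑ σ : Cfg n q, S.gibbs σ * entOf (S.condMu U σ) g
      = expec S.gibbs (fun s => g s * Real.log (g s))
        - ∑ σ : Cfg n q, S.gibbs σ *
            (S.condExp U f σ * Real.log (S.condExp U f σ)) := by
    unfold entOf
    rw [← h1]
    rw [← Finset.sum_sub_distrib]
    refine Finset.sum_congr rfl fun σ _ => ?_
    rw [← hmean σ]
    ring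
  have hEU : entOf S.gibbs (S.condExp U f)
      = (∑ σ : Cfg n q, S.gibbs σ * (S.condExp U f σ * Real.log (S.condExp U f σ)))
        - expec S.gibbs g * Real.log (expec S.gibbs g) := by
    unfold entOf
    rw [h2']
    rfl
  rw [hsplit, hEU]
  unfold entOf
  ring

lemma entOf_condMu_nonneg (U : Finset (Fin n)) (τ : Cfg n q) {f : Cfg n q → ℝ}
    (hf : ∀ σ, 0 ≤ f σ) : 0 ≤ entOf (S.condMu U τ) f := by
  by_cases h : S.condZ U τ = 0
  · have hmu : S.condMu U τ = fun _ => 0 := by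
      funext σ
      unfold condMu
      rw [h, div_zero]
    rw [hmu]
    simp [entOf, expec]
  · refine entOf_nonneg' (S.condMu_nonneg U τ) ?_ hf
    rw [S.sum_condMu, if_neg h]

lemma condExp_nonneg (U : Finset (Fin n)) {f : Cfg n q → ℝ} (hf : ∀ σ, 0 ≤ f σ) (σ : Cfg n q) :
    0 ≤ S.condExp U f σ :=
  Finset.sum_nonneg fun σ' _ => mul_nonneg (S.condMu_nonneg _ _ _) (hf σ')

lemma sum_gibbs_eq (hZ : (∑ σ : Cfg n q, S.wt σ) ≠ 0) : ∑ σ : Cfg n q, S.gibbs σ = 1 := by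
  unfold gibbs
  rw [← Finset.sum_div]
  exact div_self hZ

/-- Entropy of the conditional expectation given no vertices vanishes. -/
lemma entOf_condExp_empty (f : Cfg n q → ℝ) : entOf S.gibbs (S.condExp ∅ f) = 0 := by
  have hconst : S.condExp ∅ f = fun _ => expec S.gibbs f := by
    funext σ
    unfold condExp
    rw [S.condMu_empty]
  rw [hconst]
  set c := expec S.gibbs f with hc
  unfold entOf expec
  rw [show (∑ σ : Cfg n q, S.gibbs σ * (c * Real.log c))
      = (∑ σ : Cfg n q, S.gibbs σ) * (c * Real.log c) from (Finset.sum_mul _ _ _).symm,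
    show (∑ σ : Cfg n q, S.gibbs σ * c) = (∑ σ : Cfg n q, S.gibbs σ) * c from
      (Finset.sum_mul _ _ _).symm]
  by_cases hZ : (∑ σ : Cfg n q, S.wt σ) = 0
  · have h0 : ∑ σ : Cfg n q, S.gibbs σ = 0 := by
      unfold gibbs
      rw [hZ]
      simp
    rw [h0]
    simp
  · rw [S.sum_gibbs_eq hZ]
    ring

/-- Entropy of the conditional expectation given all vertices is the entropy of `f`. -/
lemma entOf_condExp_univ (f : Cfg n q → ℝ) :
    entOf S.gibbs (S.condExp Finset.univ f) = entOf S.gibbs f := by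
  refine entOf_congr fun σ hσ => ?_
  have hw : S.wt σ ≠ 0 := by
    intro h0
    apply hσ
    unfold gibbs
    rw [h0, zero_div]
  have hWt : ∀ σ' : Cfg n q, S.condWt Finset.univ σ σ' = if σ' = σ then S.wt σ' else 0 := by
    intro σ'
    unfold condWt
    by_cases h : σ' = σ
    · rw [if_pos h, if_pos (fun x _ => by rw [h])]
    · rw [if_neg h, if_neg (fun hc => h (funext fun x => hc x (Finset.mem_univ x)))]
  have hZ : S.condZ Finset.univ σ = S.wt σ := by
    unfold condZ
    rw [Finset.sum_congr rfl fun σ' _ => hWt σ']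
    simp
  unfold condExp expec condMu
  rw [Finset.sum_congr rfl fun σ' (_ : σ' ∈ Finset.univ) => by rw [hWt σ', hZ]]
  have hsplit : ∀ σ' : Cfg n q,
      (if σ' = σ then S.wt σ' else 0) / S.wt σ * f σ'
        = if σ' = σ then S.wt σ' / S.wt σ * f σ' else 0 := by
    intro σ'
    split <;> simp
  rw [Finset.sum_congr rfl fun σ' _ => hsplit σ']
  rw [Finset.sum_ite_eq' Finset.univ σ (fun σ' => S.wt σ' / S.wt σ * f σ')]
  simp [div_self hw]

end SpinSystem

section Comb

open Finset

lemma sum_insert_powersetCard {n : ℕ} (k : ℕ) (F : Finset (Fin n) → ℝ) :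
    ∑ U ∈ Finset.powersetCard k (Finset.univ : Finset (Fin n)), ∑ x ∈ Uᶜ, F (insert x U)
      = ((k : ℝ) + 1) *
          ∑ W ∈ Finset.powersetCard (k+1) (Finset.univ : Finset (Fin n)), F W := by
  have h1 : ∑ U ∈ Finset.powersetCard k (Finset.univ : Finset (Fin n)),
        ∑ x ∈ Uᶜ, F (insert x U)
      = ∑ W ∈ Finset.powersetCard (k+1) (Finset.univ : Finset (Fin n)), ∑ x ∈ W, F W := by
    rw [Finset.sum_sigma', Finset.sum_sigma']
    refine Finset.sum_nbij' (fun p => ⟨insert p.2 p.1, p.2⟩) (fun p => ⟨p.1.erase p.2, p.2⟩)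
      ?_ ?_ ?_ ?_ ?_
    · rintro ⟨U, x⟩ hp
      simp only [Finset.mem_sigma, Finset.mem_powersetCard, Finset.mem_compl] at *
      obtain ⟨⟨-, hcard⟩, hx⟩ := hp
      exact ⟨⟨Finset.subset_univ _, by rw [Finset.card_insert_of_notMem hx, hcard]⟩,
        Finset.mem_insert_self _ _⟩
    · rintro ⟨W, x⟩ hp
      simp only [Finset.mem_sigma, Finset.mem_powersetCard, Finset.mem_compl] at *
      obtain ⟨⟨-, hcard⟩, hx⟩ := hp
      refine ⟨⟨Finset.subset_univ _, ?_⟩, ?_⟩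
      · rw [Finset.card_erase_of_mem hx, hcard]
        rfl
      · exact Finset.notMem_erase x W
    · rintro ⟨U, x⟩ hp
      simp only [Finset.mem_sigma, Finset.mem_compl] at hp
      simp [Finset.erase_insert hp.2]
    · rintro ⟨W, x⟩ hp
      simp only [Finset.mem_sigma] at hp
      simp [Finset.insert_erase hp.2]
    · rintro ⟨U, x⟩ _
      rfl
  rw [h1, Finset.mul_sum]
  refine Finset.sum_congr rfl fun W hW => ?_
  rw [Finset.sum_const, (Finset.mem_powersetCard.mp hW).2]
  push_cast [nsmul_eq_mul]
  ring

lemma avg_step {n : ℕ} {k : ℕ} (hk : k + 1 ≤ n) (F : Finset (Fin n) → ℝ) :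
    ((n.choose k : ℝ))⁻¹ * (((n : ℝ) - k)⁻¹ *
        ∑ U ∈ Finset.powersetCard k (Finset.univ : Finset (Fin n)), ∑ x ∈ Uᶜ, F (insert x U))
      = ((n.choose (k+1) : ℝ))⁻¹ *
          ∑ W ∈ Finset.powersetCard (k+1) (Finset.univ : Finset (Fin n)), F W := by
  rw [sum_insert_powersetCard]
  have h1 : (0:ℝ) < (n.choose k : ℝ) := by exact_mod_cast Nat.choose_pos (by omega)
  have h2 : (0:ℝ) < (n.choose (k+1) : ℝ) := by exact_mod_cast Nat.choose_pos hk
  have h3 : (0:ℝ) < (n : ℝ) - k := by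
    have : (k:ℝ) + 1 ≤ (n:ℝ) := by exact_mod_cast hk
    linarith
  have hcc : (n.choose (k+1) : ℝ) * ((k:ℝ)+1) = (n.choose k : ℝ) * ((n:ℝ) - k) := by
    have h := Nat.choose_succ_right_eq n k
    have : ((n.choose (k+1) * (k+1) : ℕ) : ℝ) = ((n.choose k * (n - k) : ℕ) : ℝ) := by
      exact_mod_cast congrArg (fun m : ℕ => (m : ℝ)) h
    push_cast [Nat.cast_sub (show k ≤ n by omega)] at this
    linarith
  have hco : ((n.choose k : ℝ))⁻¹ * (((n : ℝ) - k)⁻¹ * ((k:ℝ)+1))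
      = ((n.choose (k+1) : ℝ))⁻¹ := by
    field_simp
    linarith
  calc ((n.choose k : ℝ))⁻¹ * (((n : ℝ) - k)⁻¹ * (((k:ℝ)+1) *
          ∑ W ∈ Finset.powersetCard (k+1) (Finset.univ : Finset (Fin n)), F W))
      = (((n.choose k : ℝ))⁻¹ * (((n : ℝ) - k)⁻¹ * ((k:ℝ)+1))) *
          ∑ W ∈ Finset.powersetCard (k+1) (Finset.univ : Finset (Fin n)), F W := by ring
    _ = _ := by rw [hco]

lemma sum_compl_const {n k : ℕ} (hk : k ≤ n) (F : Finset (Fin n) → ℝ) :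
    ∑ U ∈ Finset.powersetCard k (Finset.univ : Finset (Fin n)), ∑ _x ∈ Uᶜ, F U
      = ((n : ℝ) - k) * ∑ U ∈ Finset.powersetCard k (Finset.univ : Finset (Fin n)), F U := by
  rw [Finset.mul_sum]
  refine Finset.sum_congr rfl fun U hU => ?_
  have hcard : (Uᶜ : Finset (Fin n)).card = n - k := by
    rw [Finset.card_compl, (Finset.mem_powersetCard.mp hU).2, Fintype.card_fin]
  rw [Finset.sum_const, hcard, nsmul_eq_mul, Nat.cast_sub hk]

lemma sum_gibbs_mul_sum {n q : ℕ} (S : SpinSystem n q) {ι : Type*} (c : ℝ) (V : Finset ι)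
    (e : Cfg n q → ι → ℝ) :
    ∑ σ : Cfg n q, S.gibbs σ * (c * ∑ x ∈ V, e σ x)
      = c * ∑ x ∈ V, ∑ σ : Cfg n q, S.gibbs σ * e σ x := by
  calc ∑ σ : Cfg n q, S.gibbs σ * (c * ∑ x ∈ V, e σ x)
      = ∑ σ : Cfg n q, ∑ x ∈ V, c * (S.gibbs σ * e σ x) := by
        refine Finset.sum_congr rfl fun σ _ => ?_
        rw [Finset.mul_sum, Finset.mul_sum]
        exact Finset.sum_congr rfl fun x _ => by ring
    _ = ∑ x ∈ V, ∑ σ : Cfg n q, c * (S.gibbs σ * e σ x) := Finset.sum_comm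
    _ = c * ∑ x ∈ V, ∑ σ : Cfg n q, S.gibbs σ * e σ x := by
        rw [Finset.mul_sum]
        exact Finset.sum_congr rfl fun x _ => (Finset.mul_sum _ _ _).symm

end Comb

namespace SpinSystem

open Finset

variable {n q : ℕ} (S : SpinSystem n q)

lemma chain_rule' {U W : Finset (Fin n)} (hUW : U ⊆ W) (f : Cfg n q → ℝ) :
    ∑ σ : Cfg n q, S.gibbs σ * entOf (S.condMu U σ) (S.condExp W f)
      = entOf S.gibbs (S.condExp W f) - entOf S.gibbs (S.condExp U f) := by
  have h := S.chain_rule hUW f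
  linarith

end SpinSystem

/-- The averaged entropy of the conditional expectation on `k` pinned vertices. -/
def Ebar {n q : ℕ} (S : SpinSystem n q) (f : Cfg n q → ℝ) (k : ℕ) : ℝ :=
  ((n.choose k : ℝ))⁻¹ *
    ∑ U ∈ Finset.powersetCard k (Finset.univ : Finset (Fin n)),
      entOf S.gibbs (S.condExp U f)

namespace SpinSystem

open Finset

variable {n q : ℕ} (S : SpinSystem n q)

lemma Ebar_zero (f : Cfg n q → ℝ) : Ebar S f 0 = 0 := by
  unfold Ebar
  rw [Finset.powersetCard_zero, Finset.sum_singleton, S.entOf_condExp_empty]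
  simp

lemma Ebar_top (f : Cfg n q → ℝ) : Ebar S f n = entOf S.gibbs f := by
  unfold Ebar
  have hps : Finset.powersetCard n (Finset.univ : Finset (Fin n)) = {Finset.univ} := by
    ext V
    simp only [Finset.mem_powersetCard, Finset.mem_singleton]
    constructor
    · rintro ⟨-, hc⟩
      exact Finset.eq_univ_of_card V (by rw [hc, Fintype.card_fin])
    · rintro rfl
      exact ⟨Finset.subset_univ _, by simp⟩
  rw [hps, Finset.sum_singleton, S.entOf_condExp_univ, Nat.choose_self]
  simp

lemma Ebar_mono {f : Cfg n q → ℝ} (hf : ∀ σ, 0 ≤ f σ) {k : ℕ} (hk : k + 1 ≤ n) :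
    Ebar S f k ≤ Ebar S f (k+1) := by
  set F : Finset (Fin n) → ℝ := fun V => entOf S.gibbs (S.condExp V f) with hF
  have hEEmono : ∀ U : Finset (Fin n), ∀ x : Fin n, F U ≤ F (insert x U) := by
    intro U x
    have h := S.chain_rule' (Finset.subset_insert x U) f
    have hpos : 0 ≤ ∑ σ : Cfg n q, S.gibbs σ * entOf (S.condMu U σ) (S.condExp (insert x U) f) :=
      Finset.sum_nonneg fun σ _ => mul_nonneg (S.gibbs_nonneg σ)
        (S.entOf_condMu_nonneg U σ (S.condExp_nonneg _ hf))
    simp only [hF]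
    linarith
  have h1 : Ebar S f (k+1)
      = ((n.choose k : ℝ))⁻¹ * (((n : ℝ) - k)⁻¹ *
          ∑ U ∈ Finset.powersetCard k (Finset.univ : Finset (Fin n)),
            ∑ x ∈ Uᶜ, F (insert x U)) := (avg_step hk F).symm
  have h2 : Ebar S f k
      = ((n.choose k : ℝ))⁻¹ * (((n : ℝ) - k)⁻¹ *
          ∑ U ∈ Finset.powersetCard k (Finset.univ : Finset (Fin n)),
            ∑ _x ∈ Uᶜ, F U) := by
    rw [sum_compl_const (by omega) F]
    unfold Ebar
    have h3 : (0:ℝ) < (n : ℝ) - k := by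
      have : (k:ℝ) + 1 ≤ (n:ℝ) := by exact_mod_cast hk
      linarith
    field_simp
    rfl
  rw [h1, h2]
  have hnn1 : (0:ℝ) ≤ ((n.choose k : ℝ))⁻¹ := by positivity
  have hnn2 : (0:ℝ) ≤ ((n : ℝ) - k)⁻¹ := by
    have : (k:ℝ) + 1 ≤ (n:ℝ) := by exact_mod_cast hk
    have : (0:ℝ) ≤ (n:ℝ) - k := by linarith
    positivity
  refine mul_le_mul_of_nonneg_left (mul_le_mul_of_nonneg_left ?_ hnn2) hnn1
  exact Finset.sum_le_sum fun U _ => Finset.sum_le_sum fun x _ => hEEmono U x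

end SpinSystem

namespace SpinSystem

open Finset

variable {n q : ℕ} (S : SpinSystem n q)

lemma gibbs_pinning {σ : Cfg n q} (hσ : S.gibbs σ ≠ 0) (U : Finset (Fin n)) :
    S.IsPinning U σ := by
  have hw : S.wt σ ≠ 0 := by
    intro h0
    apply hσ
    unfold gibbs
    rw [h0, zero_div]
  exact ⟨σ, lt_of_le_of_ne (S.wt_nonneg σ) (Ne.symm hw), fun _ _ => rfl⟩

lemma Ebar_level {k : ℕ} (hk2 : k + 2 ≤ n) {a : ℝ} (ha : 0 ≤ a)
    (f : Cfg n q → ℝ) (hf : ∀ σ, 0 ≤ f σ)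
    (hloc : ∀ U : Finset (Fin n), U.card = k → ∀ τ : Cfg n q, S.IsPinning U τ →
      (1 + a) * (((n : ℝ) - k)⁻¹ *
          ∑ x ∈ Uᶜ, entOf (S.condMu U τ) (S.condExp (insert x U) f))
        ≤ (((n : ℝ) - k) * ((n : ℝ) - k - 1))⁻¹ *
            ∑ x ∈ Uᶜ, ∑ y ∈ Uᶜ.erase x,
              entOf (S.condMu U τ) (S.condExp (insert y (insert x U)) f)) :
    (1 + a) * (Ebar S f (k+1) - Ebar S f k) ≤ Ebar S f (k+2) - Ebar S f k := by
  set F : Finset (Fin n) → ℝ := fun V => entOf S.gibbs (S.condExp V f) with hF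
  have hEb : ∀ m : ℕ, Ebar S f m = (n.choose m : ℝ)⁻¹ *
      ∑ U ∈ Finset.powersetCard m (Finset.univ : Finset (Fin n)), F U := fun m => rfl
  have hnk1 : (0:ℝ) < (n:ℝ) - k := by
    have : (k:ℝ) + 2 ≤ (n:ℝ) := by exact_mod_cast hk2
    linarith
  have hnk2 : (0:ℝ) < (n:ℝ) - k - 1 := by
    have : (k:ℝ) + 2 ≤ (n:ℝ) := by exact_mod_cast hk2
    linarith
  have hne1 : ((n:ℝ) - k) ≠ 0 := ne_of_gt hnk1
  have hne2 : ((n:ℝ) - k - 1) ≠ 0 := ne_of_gt hnk2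
  -- counting facts
  have hUc : ∀ U ∈ Finset.powersetCard k (Finset.univ : Finset (Fin n)),
      (Uᶜ : Finset (Fin n)).card = n - k := by
    intro U hU
    rw [Finset.card_compl, (Finset.mem_powersetCard.mp hU).2, Fintype.card_fin]
  have hUxc : ∀ U ∈ Finset.powersetCard k (Finset.univ : Finset (Fin n)), ∀ x ∈ Uᶜ,
      ((insert x U)ᶜ : Finset (Fin n)).card = n - (k+1) := by
    intro U hU x hx
    rw [Finset.card_compl, Finset.card_insert_of_notMem (Finset.mem_compl.mp hx),
      (Finset.mem_powersetCard.mp hU).2, Fintype.card_fin]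
  -- per-U inequality
  have perU : ∀ U ∈ Finset.powersetCard k (Finset.univ : Finset (Fin n)),
      (1 + a) * (((n : ℝ) - k)⁻¹ * (∑ x ∈ Uᶜ, F (insert x U)) - F U)
        ≤ ((n : ℝ) - k)⁻¹ * (((n : ℝ) - k - 1)⁻¹ *
            ∑ x ∈ Uᶜ, ∑ y ∈ (insert x U)ᶜ, F (insert y (insert x U))) - F U := by
    intro U hU
    have hUcard : U.card = k := (Finset.mem_powersetCard.mp hU).2
    have hsum : ∑ σ : Cfg n q, S.gibbs σ *
          ((1 + a) * (((n : ℝ) - k)⁻¹ *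
            ∑ x ∈ Uᶜ, entOf (S.condMu U σ) (S.condExp (insert x U) f)))
        ≤ ∑ σ : Cfg n q, S.gibbs σ *
            ((((n : ℝ) - k) * ((n : ℝ) - k - 1))⁻¹ *
              ∑ x ∈ Uᶜ, ∑ y ∈ Uᶜ.erase x,
                entOf (S.condMu U σ) (S.condExp (insert y (insert x U)) f)) := by
      refine Finset.sum_le_sum fun σ _ => ?_
      by_cases h0 : S.gibbs σ = 0
      · rw [h0, zero_mul, zero_mul]
      · exact mul_le_mul_of_nonneg_left (hloc U hUcard σ (S.gibbs_pinning h0 U))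
          (S.gibbs_nonneg σ)
    -- identify the left-hand side
    have hL : ∑ σ : Cfg n q, S.gibbs σ *
          ((1 + a) * (((n : ℝ) - k)⁻¹ *
            ∑ x ∈ Uᶜ, entOf (S.condMu U σ) (S.condExp (insert x U) f)))
        = (1 + a) * (((n : ℝ) - k)⁻¹ * ∑ x ∈ Uᶜ, (F (insert x U) - F U)) := by
      have hswap := sum_gibbs_mul_sum S ((1 + a) * ((n : ℝ) - k)⁻¹) Uᶜ
        (fun σ x => entOf (S.condMu U σ) (S.condExp (insert x U) f))
      calc ∑ σ : Cfg n q, S.gibbs σ *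
            ((1 + a) * (((n : ℝ) - k)⁻¹ *
              ∑ x ∈ Uᶜ, entOf (S.condMu U σ) (S.condExp (insert x U) f)))
          = ∑ σ : Cfg n q, S.gibbs σ *
              (((1 + a) * ((n : ℝ) - k)⁻¹) *
                ∑ x ∈ Uᶜ, entOf (S.condMu U σ) (S.condExp (insert x U) f)) :=
            Finset.sum_congr rfl fun σ _ => by ring
        _ = ((1 + a) * ((n : ℝ) - k)⁻¹) * ∑ x ∈ Uᶜ, ∑ σ : Cfg n q,
              S.gibbs σ * entOf (S.condMu U σ) (S.condExp (insert x U) f) := hswap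
        _ = (1 + a) * (((n : ℝ) - k)⁻¹ * ∑ x ∈ Uᶜ, (F (insert x U) - F U)) := by
            rw [Finset.sum_congr rfl fun x (_ : x ∈ Uᶜ) =>
              S.chain_rule' (Finset.subset_insert x U) f]
            ring
    -- identify the right-hand side
    have hR : ∑ σ : Cfg n q, S.gibbs σ *
          ((((n : ℝ) - k) * ((n : ℝ) - k - 1))⁻¹ *
            ∑ x ∈ Uᶜ, ∑ y ∈ Uᶜ.erase x,
              entOf (S.condMu U σ) (S.condExp (insert y (insert x U)) f))
        = (((n : ℝ) - k) * ((n : ℝ) - k - 1))⁻¹ *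
            ∑ x ∈ Uᶜ, ∑ y ∈ (insert x U)ᶜ, (F (insert y (insert x U)) - F U) := by
      have hswap := sum_gibbs_mul_sum S ((((n : ℝ) - k) * ((n : ℝ) - k - 1))⁻¹) Uᶜ
        (fun σ x => ∑ y ∈ Uᶜ.erase x,
          entOf (S.condMu U σ) (S.condExp (insert y (insert x U)) f))
      have hinner : ∀ x : Fin n, ∑ σ : Cfg n q, S.gibbs σ *
            ∑ y ∈ Uᶜ.erase x,
              entOf (S.condMu U σ) (S.condExp (insert y (insert x U)) f)
          = ∑ y ∈ (insert x U)ᶜ, (F (insert y (insert x U)) - F U) := by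
        intro x
        have hswap2 := sum_gibbs_mul_sum S (1 : ℝ) (Uᶜ.erase x)
          (fun σ y => entOf (S.condMu U σ) (S.condExp (insert y (insert x U)) f))
        calc ∑ σ : Cfg n q, S.gibbs σ *
              ∑ y ∈ Uᶜ.erase x,
                entOf (S.condMu U σ) (S.condExp (insert y (insert x U)) f)
            = ∑ σ : Cfg n q, S.gibbs σ * ((1:ℝ) *
                ∑ y ∈ Uᶜ.erase x,
                  entOf (S.condMu U σ) (S.condExp (insert y (insert x U)) f)) :=
              Finset.sum_congr rfl fun σ _ => by ring
          _ = (1:ℝ) * ∑ y ∈ Uᶜ.erase x, ∑ σ : Cfg n q, S.gibbs σ *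
                entOf (S.condMu U σ) (S.condExp (insert y (insert x U)) f) := hswap2
          _ = ∑ y ∈ (insert x U)ᶜ, (F (insert y (insert x U)) - F U) := by
              rw [one_mul, ← Finset.compl_insert]
              refine Finset.sum_congr rfl fun y _ => ?_
              exact S.chain_rule'
                ((Finset.subset_insert x U).trans (Finset.subset_insert y _)) f
      calc ∑ σ : Cfg n q, S.gibbs σ *
            ((((n : ℝ) - k) * ((n : ℝ) - k - 1))⁻¹ *
              ∑ x ∈ Uᶜ, ∑ y ∈ Uᶜ.erase x,
                entOf (S.condMu U σ) (S.condExp (insert y (insert x U)) f))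
          = (((n : ℝ) - k) * ((n : ℝ) - k - 1))⁻¹ * ∑ x ∈ Uᶜ, ∑ σ : Cfg n q, S.gibbs σ *
              ∑ y ∈ Uᶜ.erase x,
                entOf (S.condMu U σ) (S.condExp (insert y (insert x U)) f) := hswap
        _ = _ := by rw [Finset.sum_congr rfl fun x (_ : x ∈ Uᶜ) => hinner x]
    rw [hL, hR] at hsum
    -- now convert both sides using the counting identities
    have hcardU : ((Uᶜ : Finset (Fin n)).card : ℝ) = (n:ℝ) - k := by
      rw [hUc U hU, Nat.cast_sub (by omega)]
    have hLconv : (1 + a) * (((n : ℝ) - k)⁻¹ * ∑ x ∈ Uᶜ, (F (insert x U) - F U))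
        = (1 + a) * (((n : ℝ) - k)⁻¹ * (∑ x ∈ Uᶜ, F (insert x U)) - F U) := by
      rw [Finset.sum_sub_distrib, Finset.sum_const, nsmul_eq_mul, hcardU]
      field_simp
      try ring
    have hRconv : (((n : ℝ) - k) * ((n : ℝ) - k - 1))⁻¹ *
          ∑ x ∈ Uᶜ, ∑ y ∈ (insert x U)ᶜ, (F (insert y (insert x U)) - F U)
        = ((n : ℝ) - k)⁻¹ * (((n : ℝ) - k - 1)⁻¹ *
            ∑ x ∈ Uᶜ, ∑ y ∈ (insert x U)ᶜ, F (insert y (insert x U))) - F U := by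
      have hyc : ∀ x ∈ Uᶜ, ∑ y ∈ (insert x U)ᶜ, (F (insert y (insert x U)) - F U)
          = (∑ y ∈ (insert x U)ᶜ, F (insert y (insert x U))) - ((n:ℝ) - k - 1) * F U := by
        intro x hx
        rw [Finset.sum_sub_distrib, Finset.sum_const, nsmul_eq_mul, hUxc U hU x hx,
          Nat.cast_sub (by omega)]
        push_cast
        ring
      rw [Finset.sum_congr rfl hyc, Finset.sum_sub_distrib, Finset.sum_const, nsmul_eq_mul,
        hcardU]
      field_simp
      try ring
    rw [hLconv, hRconv] at hsum
    exact hsum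
  -- sum over U and normalize
  have hsumU := Finset.sum_le_sum perU
  have hCpos : (0:ℝ) < (n.choose k : ℝ) := by exact_mod_cast Nat.choose_pos (by omega)
  have hmul := mul_le_mul_of_nonneg_left hsumU (le_of_lt (inv_pos.mpr hCpos))
  -- left side aggregation
  have h1 : (n.choose k : ℝ)⁻¹ * (((n : ℝ) - k)⁻¹ *
        ∑ U ∈ Finset.powersetCard k (Finset.univ : Finset (Fin n)),
          ∑ x ∈ Uᶜ, F (insert x U))
      = (n.choose (k+1) : ℝ)⁻¹ *
          ∑ W ∈ Finset.powersetCard (k+1) (Finset.univ : Finset (Fin n)), F W :=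
    avg_step (by omega) F
  have hLagg : (n.choose k : ℝ)⁻¹ *
        ∑ U ∈ Finset.powersetCard k (Finset.univ : Finset (Fin n)),
          (1 + a) * (((n : ℝ) - k)⁻¹ * (∑ x ∈ Uᶜ, F (insert x U)) - F U)
      = (1 + a) * (Ebar S f (k+1) - Ebar S f k) := by
    rw [← Finset.mul_sum, Finset.sum_sub_distrib]
    rw [show (∑ U ∈ Finset.powersetCard k (Finset.univ : Finset (Fin n)),
        ((n : ℝ) - k)⁻¹ * ∑ x ∈ Uᶜ, F (insert x U))
      = ((n : ℝ) - k)⁻¹ * ∑ U ∈ Finset.powersetCard k (Finset.univ : Finset (Fin n)),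
          ∑ x ∈ Uᶜ, F (insert x U) from (Finset.mul_sum _ _ _).symm]
    rw [hEb (k+1), hEb k]
    linear_combination (1 + a) * h1
  -- right side aggregation
  have hstep1 : (n.choose k : ℝ)⁻¹ * (((n : ℝ) - k)⁻¹ *
        ∑ U ∈ Finset.powersetCard k (Finset.univ : Finset (Fin n)),
          ∑ x ∈ Uᶜ, ∑ y ∈ (insert x U)ᶜ, F (insert y (insert x U)))
      = (n.choose (k+1) : ℝ)⁻¹ *
          ∑ V ∈ Finset.powersetCard (k+1) (Finset.univ : Finset (Fin n)),
            ∑ y ∈ Vᶜ, F (insert y V) :=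
    avg_step (by omega) (fun V => ∑ y ∈ Vᶜ, F (insert y V))
  have hstep2 : (n.choose (k+1) : ℝ)⁻¹ * (((n : ℝ) - ((k+1 : ℕ) : ℝ))⁻¹ *
        ∑ V ∈ Finset.powersetCard (k+1) (Finset.univ : Finset (Fin n)),
          ∑ y ∈ Vᶜ, F (insert y V))
      = (n.choose (k+2) : ℝ)⁻¹ *
          ∑ W ∈ Finset.powersetCard (k+2) (Finset.univ : Finset (Fin n)), F W :=
    avg_step (by omega) F
  push_cast at hstep2
  have hRagg : (n.choose k : ℝ)⁻¹ *
        ∑ U ∈ Finset.powersetCard k (Finset.univ : Finset (Fin n)),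
          (((n : ℝ) - k)⁻¹ * (((n : ℝ) - k - 1)⁻¹ *
            ∑ x ∈ Uᶜ, ∑ y ∈ (insert x U)ᶜ, F (insert y (insert x U))) - F U)
      = Ebar S f (k+2) - Ebar S f k := by
    rw [Finset.sum_sub_distrib]
    rw [show (∑ U ∈ Finset.powersetCard k (Finset.univ : Finset (Fin n)),
        ((n : ℝ) - k)⁻¹ * (((n : ℝ) - k - 1)⁻¹ *
          ∑ x ∈ Uᶜ, ∑ y ∈ (insert x U)ᶜ, F (insert y (insert x U))))
      = (((n : ℝ) - k)⁻¹ * ((n : ℝ) - k - 1)⁻¹) *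
          ∑ U ∈ Finset.powersetCard k (Finset.univ : Finset (Fin n)),
            ∑ x ∈ Uᶜ, ∑ y ∈ (insert x U)ᶜ, F (insert y (insert x U)) from by
        rw [Finset.mul_sum]
        exact Finset.sum_congr rfl fun U _ => by ring]
    rw [hEb (k+2), hEb k]
    linear_combination ((n : ℝ) - k - 1)⁻¹ * hstep1 + hstep2
  rw [hLagg, hRagg] at hmul
  exact hmul

end SpinSystem

/-- Purely numeric part of the local-to-global recursion. -/
lemma recursion_numeric {α : ℕ → ℝ} {E : ℕ → ℝ} {n j : ℕ}
    (hn : 2 ≤ n) (hj1 : 1 ≤ j) (hj2 : j ≤ n - 1)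
    (hα : ∀ k, k ≤ n - 2 → 0 ≤ α k)
    (hmono : ∀ k, k + 1 ≤ n → E k ≤ E (k+1))
    (hlev : ∀ k, k + 2 ≤ n → (1 + α k) * (E (k+1) - E k) ≤ E (k+2) - E k)
    (hE0 : E 0 = 0) :
    E j ≤ (1 - (∑ i ∈ Finset.Ico j n, ∏ k ∈ Finset.range i, α k) /
        (∑ i ∈ Finset.range n, ∏ k ∈ Finset.range i, α k)) * E n := by
  have hΓnn : ∀ i, i ≤ n - 1 → 0 ≤ ∏ m ∈ Finset.range i, α m := fun i hi =>
    Finset.prod_nonneg fun m hm => hα m (by have := Finset.mem_range.mp hm; omega)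
  have hDrec : ∀ k, k + 2 ≤ n → α k * (E (k+1) - E k) ≤ E (k+2) - E (k+1) := by
    intro k hk
    have h := hlev k hk
    nlinarith [h]
  have cross : ∀ k i, k ≤ i → i ≤ n - 1 →
      (∏ m ∈ Finset.range i, α m) * (E (k+1) - E k)
        ≤ (∏ m ∈ Finset.range k, α m) * (E (i+1) - E i) := by
    intro k i hki
    induction i, hki using Nat.le_induction with
    | base => exact fun _ => le_rfl
    | succ i hki ih =>
      intro hi
      have h1 := ih (by omega)
      have hαi : 0 ≤ α i := hα i (by omega)
      have hrec := hDrec i (by omega)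
      have hΓk : 0 ≤ ∏ m ∈ Finset.range k, α m := hΓnn k (by omega)
      calc (∏ m ∈ Finset.range (i+1), α m) * (E (k+1) - E k)
          = α i * ((∏ m ∈ Finset.range i, α m) * (E (k+1) - E k)) := by
            rw [Finset.prod_range_succ]; ring
        _ ≤ α i * ((∏ m ∈ Finset.range k, α m) * (E (i+1) - E i)) :=
            mul_le_mul_of_nonneg_left h1 hαi
        _ = (∏ m ∈ Finset.range k, α m) * (α i * (E (i+1) - E i)) := by ring
        _ ≤ (∏ m ∈ Finset.range k, α m) * (E (i+2) - E (i+1)) :=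
            mul_le_mul_of_nonneg_left hrec hΓk
  have hjn : j ≤ n := by omega
  have sumIneq : (∑ k ∈ Finset.range j, (E (k+1) - E k)) *
        (∑ i ∈ Finset.Ico j n, ∏ m ∈ Finset.range i, α m)
      ≤ (∑ k ∈ Finset.range j, ∏ m ∈ Finset.range k, α m) *
          (∑ i ∈ Finset.Ico j n, (E (i+1) - E i)) := by
    rw [Finset.sum_mul_sum, Finset.sum_mul_sum]
    refine Finset.sum_le_sum fun k hk => Finset.sum_le_sum fun i hi => ?_
    have hk' := Finset.mem_range.mp hk
    obtain ⟨hij, hin⟩ := Finset.mem_Ico.mp hi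
    calc (E (k+1) - E k) * ∏ m ∈ Finset.range i, α m
        = (∏ m ∈ Finset.range i, α m) * (E (k+1) - E k) := mul_comm _ _
      _ ≤ (∏ m ∈ Finset.range k, α m) * (E (i+1) - E i) := cross k i (by omega) (by omega)
  have hEj : E j = ∑ k ∈ Finset.range j, (E (k+1) - E k) := by
    rw [Finset.sum_range_sub, hE0, sub_zero]
  have hEn : E n = ∑ k ∈ Finset.range n, (E (k+1) - E k) := by
    rw [Finset.sum_range_sub, hE0, sub_zero]
  have hsplitD := (Finset.sum_range_add_sum_Ico (fun k => E (k+1) - E k) hjn).symm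
  have hsplitΓ := (Finset.sum_range_add_sum_Ico (fun i => ∏ m ∈ Finset.range i, α m) hjn).symm
  have hSnpos : 0 < ∑ i ∈ Finset.range n, ∏ m ∈ Finset.range i, α m := by
    have h01 : (∏ m ∈ Finset.range 0, α m) = 1 := Finset.prod_range_zero α
    have hmem : (0:ℕ) ∈ Finset.range n := Finset.mem_range.mpr (by omega)
    have hle : (∏ m ∈ Finset.range 0, α m)
        ≤ ∑ i ∈ Finset.range n, ∏ m ∈ Finset.range i, α m :=
      Finset.single_le_sum (f := fun i => ∏ m ∈ Finset.range i, α m)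
        (fun i hi => hΓnn i (by have := Finset.mem_range.mp hi; omega)) hmem
    rw [h01] at hle
    linarith
  have hcoef : 1 - (∑ i ∈ Finset.Ico j n, ∏ m ∈ Finset.range i, α m) /
        (∑ i ∈ Finset.range n, ∏ m ∈ Finset.range i, α m)
      = (∑ i ∈ Finset.range j, ∏ m ∈ Finset.range i, α m) /
          (∑ i ∈ Finset.range n, ∏ m ∈ Finset.range i, α m) := by
    rw [eq_div_iff (ne_of_gt hSnpos), sub_mul, one_mul,
      div_mul_cancel₀ _ (ne_of_gt hSnpos)]
    linarith [hsplitΓ]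
  rw [hcoef, div_mul_eq_mul_div, le_div_iff₀ hSnpos, hEj, hEn, hsplitD, hsplitΓ]
  nlinarith [sumIneq]

/-- the local-to-global recursion: local entropy inequalities with
coefficients `α_k` imply global contraction of the averaged conditional entropies. -/
theorem local_to_global_entropy_contraction
    {n q : ℕ} (S : SpinSystem n q) (α : ℕ → ℝ)
    (hα : ∀ k : ℕ, k ≤ n - 2 → 0 ≤ α k)
    (hloc : ∀ k : ℕ, k ≤ n - 2 →
      ∀ U : Finset (Fin n), U.card = k → ∀ τ : Cfg n q, S.IsPinning U τ →
        ∀ f : Cfg n q → ℝ, (∀ σ, 0 ≤ f σ) →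
          (1 + α k) *
              (((n : ℝ) - k)⁻¹ *
                ∑ x ∈ Uᶜ, entOf (S.condMu U τ) (S.condExp (insert x U) f))
            ≤ (((n : ℝ) - k) * ((n : ℝ) - k - 1))⁻¹ *
                ∑ x ∈ Uᶜ, ∑ y ∈ Uᶜ.erase x,
                  entOf (S.condMu U τ) (S.condExp (insert y (insert x U)) f)) :
    ∀ f : Cfg n q → ℝ, (∀ σ, 0 ≤ f σ) →
      ∀ j : ℕ, 1 ≤ j → j ≤ n - 1 →
        (Nat.choose n j : ℝ)⁻¹ *
            ∑ U ∈ Finset.powersetCard j (Finset.univ : Finset (Fin n)),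
              entOf S.gibbs (S.condExp U f)
          ≤ (1 - (∑ i ∈ Finset.Ico j n, ∏ k ∈ Finset.range i, α k) /
                (∑ i ∈ Finset.range n, ∏ k ∈ Finset.range i, α k)) *
              entOf S.gibbs f := by
  intro f hf j hj1 hj2
  have hn : 2 ≤ n := by omega
  have hmono : ∀ k, k + 1 ≤ n → Ebar S f k ≤ Ebar S f (k+1) :=
    fun k hk => S.Ebar_mono hf hk
  have hlev : ∀ k, k + 2 ≤ n →
      (1 + α k) * (Ebar S f (k+1) - Ebar S f k) ≤ Ebar S f (k+2) - Ebar S f k :=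
    fun k hk => S.Ebar_level hk (hα k (by omega)) f hf
      (fun U hU τ hτ => hloc k (by omega) U hU τ hτ f hf)
  have hmain := recursion_numeric (α := α) (E := Ebar S f) hn hj1 hj2 hα hmono hlev
    (S.Ebar_zero f)
  rw [show entOf S.gibbs f = Ebar S f n from (S.Ebar_top f).symm]
  exact hmain
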